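/- Every cubic space (W,S) over k with dim_k W ≤ ℵ₀ admits an embedding of cubic spaces W → V(∞). -/

import Mathlib

open scoped BigOperators

/-- The trilinear form on `ι →₀ k` with coefficients `c` relative to the standard basis:
`(x, y, z) ↦ ∑ u v w, x u • (y v • (z w • c u v w))`. -/
noncomputable def triBasis (k : Type*) [Field k] {ι : Type*} (c : ι → ι → ι → k) :
    (ι →₀ k) →ₗ[k] (ι →₀ k) →ₗ[k] (ι →₀ k) →ₗ[k] k :=
  Finsupp.lsum k fun u => LinearMap.toSpanSingleton k _ <|
    Finsupp.lsum k fun v => LinearMap.toSpanSingleton k _ <|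
      Finsupp.lsum k fun w => LinearMap.toSpanSingleton k k (c u v w)

/-- Pullback of a trilinear form along a linear map: `comp3 T f x y z = T (f x) (f y) (f z)`. -/
noncomputable def comp3 {k A B : Type*} [Field k] [AddCommGroup A] [Module k A]
    [AddCommGroup B] [Module k B]
    (T : B →ₗ[k] B →ₗ[k] B →ₗ[k] k) (f : A →ₗ[k] B) :
    A →ₗ[k] A →ₗ[k] A →ₗ[k] k where
  toFun a := (T (f a)).compl₁₂ f f
  map_add' a a' := by ext x y; simp [LinearMap.compl₁₂_apply, map_add]
  map_smul' c a := by ext x y; simp [LinearMap.compl₁₂_apply, map_smul]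

/-- The underlying vector space of `V(∞)`: pairs of finitely supported functions. -/
abbrev VInf (k : Type*) [Field k] := (ℕ →₀ k) × ((ℕ × ℕ) →₀ k)

/-- `gInf u v w` is `1` exactly when `u = inl i` and `v = w = inr (i,j)` for some `i, j`. -/
def gInf (k : Type*) [Field k] : (ℕ ⊕ ℕ × ℕ) → (ℕ ⊕ ℕ × ℕ) → (ℕ ⊕ ℕ × ℕ) → k
  | Sum.inl i, Sum.inr p, Sum.inr q => if p = q ∧ p.1 = i then 1 else 0
  | _, _, _ => 0

/-- Coefficients of the symmetric trilinear form `T∞` relative to the standard basis of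
`(ℕ ⊕ ℕ × ℕ) →₀ k` (basis vectors indexed by `inl i` are the `x_i` coordinates, those
indexed by `inr (i,j)` the `y_{i,j}` coordinates). -/
def cInf (k : Type*) [Field k] (u v w : ℕ ⊕ ℕ × ℕ) : k :=
  gInf k u v w + gInf k v u w + gInf k w u v

/-- The identification of `V(∞)` with finitely supported functions on `ℕ ⊕ ℕ × ℕ`,
sending `(a, b)` to the function equal to `a` on `inl` and to `b` on `inr`. -/
noncomputable def eInf (k : Type*) [Field k] : VInf k →ₗ[k] ((ℕ ⊕ ℕ × ℕ) →₀ k) :=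
  (Finsupp.sumFinsuppLEquivProdFinsupp k).symm.toLinearMap

/-- The symmetric trilinear form `T∞` of the cubic space `V(∞)`:
`T∞((a,b),(a',b'),(a'',b'')) = ∑ i j, (a i * b' (i,j) * b'' (i,j)
  + a' i * b (i,j) * b'' (i,j) + a'' i * b (i,j) * b' (i,j))`,
whose associated cubic form is `F∞(a,b) = 3 * ∑ i, a i * (∑ j, (b (i,j))^2)`. -/
noncomputable def TInf (k : Type*) [Field k] :
    VInf k →ₗ[k] VInf k →ₗ[k] VInf k →ₗ[k] k :=
  comp3 (triBasis k (cInf k)) (eInf k)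

/-!
Choose a basis `e₀, e₁, …` of `W`, put `C a b c = S (e a) (e b) (e c)` and send `eₙ` to
`(δₙ, Bₙ)`, where row `i` of `Bₙ` is a vector `u i n` that vanishes for `n < i`. Then
`T∞(φ e_a, φ e_b, φ e_c) = ⟨u a b, u a c⟩ + ⟨u b a, u b c⟩ + ⟨u c a, u c b⟩`, so it suffices that
for each row `i` the vectors `u i n` have Gram matrix `C i p q * w i p q`, where the weights `w`
charge `C a b c` to the rows of the smallest of `a, b, c`, split evenly among ties (this needs
`2` and `3` invertible). Over a field in which every element is a square, every symmetric
`ℕ × ℕ` matrix is the Gram matrix of finitely supported vectors: build them one at a time, the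
`n`-th supported on `[0, 2n + 1]` with a nonzero pivot at `2n`; a triangular system fixes its
inner products with the earlier vectors, and the coordinates `2n, 2n + 1` fix its own square.
-/

namespace Finsupp

variable {α M N : Type*} [Zero M] [AddCommMonoid N]

theorem sum_ite_eq_of_zero [DecidableEq α] (f : α →₀ M) (a : α) {g : α → M → N}
    (hg : ∀ x, g x 0 = 0) : (f.sum fun x v => if a = x then g x v else 0) = g a (f a) := by
  rw [sum_ite_eq]
  split_ifs with h
  · rfl
  · rw [notMem_support_iff.1 h, hg]

theorem sum_ite_irrel_zero (P : Prop) [Decidable P] (f : α →₀ M) (g : α → M → N) :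
    (f.sum fun x v => if P then g x v else 0) = if P then f.sum g else 0 := by
  split_ifs <;> simp

end Finsupp

section Dot

variable {k ι : Type*} [Field k]

noncomputable def dot (x y : ι →₀ k) : k := x.sum fun j r => r * y j

theorem dot_eq_sum_of_support_subset {x : ι →₀ k} {s : Finset ι} (hx : x.support ⊆ s)
    (y : ι →₀ k) : dot x y = ∑ j ∈ s, x j * y j :=
  Finsupp.sum_of_support_subset x hx _ fun _ _ => zero_mul _

theorem dot_comm (x y : ι →₀ k) : dot x y = dot y x := by
  classical
  rw [dot_eq_sum_of_support_subset Finset.subset_union_left y,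
    dot_eq_sum_of_support_subset (Finset.subset_union_right (s₁ := x.support)) x]
  exact Finset.sum_congr rfl fun _ _ => mul_comm _ _

@[simp] theorem dot_zero_left (y : ι →₀ k) : dot 0 y = 0 := Finsupp.sum_zero_index

@[simp] theorem dot_zero_right (x : ι →₀ k) : dot x 0 = 0 := by simp [dot]

theorem dot_add_single (x y : ι →₀ k) (j : ι) (r : k) :
    dot (x + Finsupp.single j r) y = dot x y + r * y j :=
  (Finsupp.sum_add_index' (fun _ => zero_mul _) fun _ _ _ => add_mul _ _ _).trans
    (congrArg _ (Finsupp.sum_single_index (zero_mul _)))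

end Dot

section Gram

open Finset

variable {k : Type*} [Field k]

theorem apply_eq_zero_of_support_subset_range {x : ℕ →₀ k} {N : ℕ} (hx : x.support ⊆ range N)
    {j : ℕ} (hj : N ≤ j) : x j = 0 :=
  Finsupp.notMem_support_iff.1 fun h => (mem_range.1 (hx h)).not_ge hj

def IsPivotedAt (n : ℕ) (v : ℕ →₀ k) : Prop :=
  v.support ⊆ range (2 * n + 2) ∧ v (2 * n) ≠ 0

theorem IsPivotedAt.apply_eq_zero {n : ℕ} {v : ℕ →₀ k} (hv : IsPivotedAt n v) {j : ℕ}
    (hj : 2 * n + 2 ≤ j) : v j = 0 :=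
  apply_eq_zero_of_support_subset_range hv.1 hj

theorem exists_dot_eq_of_isPivotedAt {w : ℕ → ℕ →₀ k} {n : ℕ}
    (hw : ∀ m < n, IsPivotedAt m (w m)) (g : ℕ → k) :
    ∃ x : ℕ →₀ k, x.support ⊆ range (2 * n) ∧ ∀ m < n, dot x (w m) = g m := by
  induction n with
  | zero => exact ⟨0, by simp, fun m hm => absurd hm (Nat.not_lt_zero m)⟩
  | succ n ih =>
    obtain ⟨x, hx, hxw⟩ := ih fun m hm => hw m (by omega)
    have hpivot := (hw n n.lt_succ_self).2
    refine ⟨x + Finsupp.single (2 * n) ((g n - dot x (w n)) / w n (2 * n)), ?_, fun m hm => ?_⟩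
    · refine Finsupp.support_add.trans (union_subset (hx.trans ?_) ?_)
      · exact range_subset_range.2 (by omega)
      · exact Finsupp.support_single_subset.trans (by simp)
    rw [dot_add_single]
    rcases Nat.lt_succ_iff_lt_or_eq.1 hm with hm | rfl
    · rw [(hw m (by omega)).apply_eq_zero (by omega), mul_zero, add_zero, hxw m hm]
    · field_simp
      ring

theorem exists_mul_self_add_mul_self_eq (hk : ∀ r : k, IsSquare r) (c : k) :
    ∃ d e : k, d ≠ 0 ∧ d * d + e * e = c := by
  obtain ⟨i, hi⟩ := hk (-1)
  rcases eq_or_ne c 0 with rfl | hc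
  · exact ⟨1, i, one_ne_zero, by rw [← hi]; ring⟩
  · obtain ⟨d, rfl⟩ := hk c
    exact ⟨d, 0, fun h => hc (by rw [h, mul_zero]), by ring⟩

theorem exists_isPivotedAt_extension (hk : ∀ r : k, IsSquare r) {n : ℕ} {x : ℕ →₀ k}
    (hx : x.support ⊆ range (2 * n)) (c : k) :
    ∃ v, IsPivotedAt n v ∧ dot v v = c ∧
      ∀ y : ℕ →₀ k, y.support ⊆ range (2 * n) → dot v y = dot x y := by
  obtain ⟨d, e, hd, hde⟩ := exists_mul_self_add_mul_self_eq hk (c - dot x x)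
  set v := x + Finsupp.single (2 * n) d + Finsupp.single (2 * n + 1) e
  have hvy : ∀ y : ℕ →₀ k, y.support ⊆ range (2 * n) → dot v y = dot x y := fun y hy => by
    simp only [v, dot_add_single, apply_eq_zero_of_support_subset_range hy le_rfl,
      apply_eq_zero_of_support_subset_range hy (Nat.le_succ _)]
    ring
  refine ⟨v, ⟨?_, ?_⟩, ?_, hvy⟩
  · refine Finsupp.support_add.trans (union_subset (Finsupp.support_add.trans
      (union_subset (hx.trans (range_subset_range.2 (by omega))) ?_)) ?_) <;>
    exact Finsupp.support_single_subset.trans (by simp)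
  · simp [v, apply_eq_zero_of_support_subset_range hx le_rfl, hd]
  · rw [dot_add_single, dot_add_single, dot_comm, hvy x hx]
    simp [v, apply_eq_zero_of_support_subset_range hx le_rfl,
      apply_eq_zero_of_support_subset_range hx (Nat.le_succ _)]
    linear_combination hde

theorem exists_dot_eq (hk : ∀ r : k, IsSquare r) (G : ℕ → ℕ → k)
    (hG : ∀ p q, G p q = G q p) : ∃ v : ℕ → ℕ →₀ k, ∀ p q, dot (v p) (v q) = G p q := by
  have step : ∀ n (w : ℕ → ℕ →₀ k), ∃ v, IsPivotedAt n v ∧ dot v v = G n n ∧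
      ((∀ m < n, IsPivotedAt m (w m)) → ∀ m < n, dot v (w m) = G n m) := by
    intro n w
    -- `next` has to be total, so a non-pivoted history gets an arbitrary pivoted vector
    by_cases hw : ∀ m < n, IsPivotedAt m (w m)
    · obtain ⟨x, hx, hxw⟩ := exists_dot_eq_of_isPivotedAt hw (G n)
      obtain ⟨v, hv, hvv, hvx⟩ := exists_isPivotedAt_extension hk hx (G n n)
      exact ⟨v, hv, hvv, fun _ m hm =>
        (hvx _ ((hw m hm).1.trans (range_subset_range.2 (by omega)))).trans (hxw m hm)⟩
    · obtain ⟨v, hv, hvv, -⟩ :=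
        exists_isPivotedAt_extension hk (x := 0) (n := n) (by simp) (G n n)
      exact ⟨v, hv, hvv, fun h => absurd h hw⟩
  choose next hnext using step
  let v : ℕ → ℕ →₀ k :=
    Nat.strongRec fun n v => next n fun m => if h : m < n then v m h else 0
  have hv : ∀ n, v n = next n fun m => if m < n then v m else 0 :=
    fun n => Nat.strongRec_eq _ n
  have hpivot : ∀ n, IsPivotedAt n (v n) := fun n => hv n ▸ (hnext n _).1
  have hlt : ∀ n m, m < n → dot (v n) (v m) = G n m := fun n m hmn => by
    have := (hnext n fun m => if m < n then v m else 0).2.2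
      (fun m hm => by simpa [hm] using hpivot m) m hmn
    rwa [← hv, if_pos hmn] at this
  refine ⟨v, fun p q => ?_⟩
  rcases lt_trichotomy p q with h | rfl | h
  · rw [dot_comm, hlt q p h, hG]
  · rw [hv]
    exact (hnext p _).2.1
  · exact hlt p q h

theorem exists_dot_eq_of_le (hk : ∀ r : k, IsSquare r) (i : ℕ) (H : ℕ → ℕ → k)
    (hH : ∀ p q, H p q = H q p) :
    ∃ u : ℕ → ℕ →₀ k, (∀ n < i, u n = 0) ∧ ∀ p q, i ≤ p → i ≤ q → dot (u p) (u q) = H p q := by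
  obtain ⟨v, hv⟩ := exists_dot_eq hk (fun p q => H (i + p) (i + q)) fun p q => hH _ _
  refine ⟨fun n => if i ≤ n then v (n - i) else 0, fun n hn => if_neg (by omega),
    fun p q hp hq => ?_⟩
  simp only [if_pos hp, if_pos hq, hv, Nat.add_sub_cancel' hp, Nat.add_sub_cancel' hq]

end Gram

section TInf

variable {k : Type*} [Field k]

theorem triBasis_apply {ι : Type*} (c : ι → ι → ι → k) (x y z : ι →₀ k) :
    triBasis k c x y z =
      x.sum fun u r => y.sum fun v s => z.sum fun w t => r * s * t * c u v w := by
  simp [triBasis, Finsupp.lsum_apply, LinearMap.toSpanSingleton_apply, mul_assoc,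
    Finsupp.mul_sum]

open Finsupp in
theorem TInf_apply (x y z : VInf k) : TInf k x y z =
    (y.2.sum fun p s => x.1 p.1 * s * z.2 p) + (x.2.sum fun p s => y.1 p.1 * s * z.2 p)
      + x.2.sum fun p s => z.1 p.1 * s * y.2 p := by
  classical
  change triBasis k (cInf k) (sumElim x.1 x.2) (sumElim y.1 y.2) (sumElim z.1 z.2) = _
  simp only [triBasis_apply, sum_sumElim, Function.comp_def, cInf, gInf, add_zero, zero_add,
    mul_zero, mul_ite, mul_one, sum_fun_zero]
  rw [sum_comm x.1]
  simp only [ite_and, sum_ite_eq_of_zero, sum_ite_irrel_zero, mul_zero, zero_mul, ite_self,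
    implies_true]
  rw [sum_add, add_assoc]
  congr 2 <;> exact sum_congr fun _ _ => by ring

theorem sum_uncurry_single_mul (F F' : ℕ →₀ ℕ →₀ k) (a : ℕ) :
    (F.uncurry.sum fun p s => Finsupp.single a 1 p.1 * s * F'.uncurry p) = dot (F a) (F' a) := by
  classical
  refine (Finsupp.sum_uncurry_index' F fun i j s => Finsupp.single a 1 i * s * F' i j).trans ?_
  simp only [Finsupp.single_apply, ite_mul, one_mul, zero_mul, Finsupp.sum_ite_irrel_zero]
  exact Finsupp.sum_ite_eq_of_zero F a fun i => Finsupp.sum_zero_index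

theorem TInf_single_uncurry (a b c : ℕ) (F F' F'' : ℕ →₀ ℕ →₀ k) :
    TInf k (Finsupp.single a 1, F.uncurry) (Finsupp.single b 1, F'.uncurry)
        (Finsupp.single c 1, F''.uncurry) =
      dot (F' a) (F'' a) + dot (F b) (F'' b) + dot (F c) (F' c) := by
  simp only [TInf_apply, sum_uncurry_single_mul]

end TInf

section Cubic

def minShare (k : Type*) [Field k] (i p q : ℕ) : k :=
  if i ≤ p ∧ i ≤ q then ((1 + (if p = i then 1 else 0) + (if q = i then 1 else 0) : ℕ) : k)⁻¹
  else 0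

variable {k : Type*} [Field k]

theorem minShare_comm (i p q : ℕ) : minShare k i p q = minShare k i q p := by
  unfold minShare
  split_ifs <;> first | rfl | omega

theorem minShare_add_minShare_add_minShare (h2 : (2 : k) ≠ 0) (h3 : (3 : k) ≠ 0) (a b c : ℕ) :
    minShare k a b c + minShare k b a c + minShare k c a b = 1 := by
  unfold minShare
  split_ifs <;> first | omega | (norm_num; done) | (norm_num; field_simp; norm_num)

theorem exists_TInf_eq (hk : ∀ r : k, IsSquare r) (h2 : (2 : k) ≠ 0) (h3 : (3 : k) ≠ 0)
    (C : ℕ → ℕ → ℕ → k) (hC₁₂ : ∀ a b c, C a b c = C b a c)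
    (hC₂₃ : ∀ a b c, C a b c = C a c b) :
    ∃ γ : ℕ → VInf k, ∀ a b c, TInf k (γ a) (γ b) (γ c) = C a b c := by
  choose u hu0 hu using fun i => exists_dot_eq_of_le hk i (fun p q => C i p q * minShare k i p q)
    fun p q => by rw [hC₂₃, minShare_comm]
  have hrow : ∀ i p q, dot (u i p) (u i q) = C i p q * minShare k i p q := fun i p q => by
    by_cases hp : i ≤ p
    · by_cases hq : i ≤ q
      · exact hu i p q hp hq
      · simp [hu0 i q (by omega), minShare, hq]
    · simp [hu0 i p (by omega), minShare, hp]
  let F : ℕ → ℕ →₀ ℕ →₀ k := fun n => Finsupp.onFinset (Finset.range (n + 1)) (fun i => u i n)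
    fun i hi => Finset.mem_range.2 (by by_contra h; exact hi (hu0 i n (by omega)))
  refine ⟨fun n => (Finsupp.single n 1, (F n).uncurry), fun a b c => ?_⟩
  simp only [TInf_single_uncurry, F, Finsupp.onFinset_apply, hrow]
  rw [← hC₁₂ a b c, hC₁₂ c a b, hC₂₃ a c b]
  linear_combination C a b c * minShare_add_minShare_add_minShare h2 h3 a b c

end Cubic

/-- Lemma 4.3 of the paper. Every cubic space of countable dimension
embeds into the cubic space `V(∞)`. -/
theorem cubic_embedding_into_VInf
    {k W : Type*} [Field k] [IsAlgClosed k]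
    (hk2 : (2 : k) ≠ 0) (hk3 : (3 : k) ≠ 0)
    [AddCommGroup W] [Module k W]
    (S : W →ₗ[k] W →ₗ[k] W →ₗ[k] k)
    (hS1 : ∀ x y z, S x y z = S y x z) (hS2 : ∀ x y z, S x y z = S x z y)
    (hW : Module.rank k W ≤ Cardinal.aleph0) :
    ∃ φ : W →ₗ[k] VInf k, ∀ x y z, TInf k (φ x) (φ y) (φ z) = S x y z := by
  let b := Module.Basis.ofVectorSpace k W
  have : Countable (Module.Basis.ofVectorSpaceIndex k W) := by
    rw [← Cardinal.mk_le_aleph0_iff, b.mk_eq_rank'']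
    exact hW
  obtain ⟨f, hf⟩ := exists_injective_nat (Module.Basis.ofVectorSpaceIndex k W)
  let e : ℕ → W := Function.extend f b 0
  obtain ⟨γ, hγ⟩ := exists_TInf_eq IsAlgClosed.exists_eq_mul_self hk2 hk3
    (fun p q r => S (e p) (e q) (e r)) (fun _ _ _ => hS1 _ _ _) fun _ _ _ => hS2 _ _ _
  refine ⟨b.constr k (γ ∘ f), fun x y z => ?_⟩
  suffices h : comp3 (TInf k) (b.constr k (γ ∘ f)) = S by rw [← h]; rfl
  refine b.ext fun i => b.ext fun j => b.ext fun l => ?_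
  simp [comp3, b.constr_basis, hγ, e, hf.extend_apply]
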